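/- Let X be a finite set of positive integers, let t ≥ 0 be an integer, let Δ ≥ 0 be a real number, and let (X', X'') be a weighted (t,Δ)-halver of X. Then SUMS(X) ∩ [t] ⊆ {y ∈ SUMS(X') : y ≤ t/2 + Δ} + {y ∈ SUMS(X'') : y ≤ t/2 + Δ} ⊆ SUMS(X). -/
import Mathlib


open Pointwise

/-- `SUM S` is the sum of the elements of the finite set `S`. -/
def SUM (S : Finset ℕ) : ℕ := S.sum id

/-- `SUMS X` is the set of all subset sums of `X`. -/
def SUMS (X : Finset ℕ) : Set ℕ := {y | ∃ S ⊆ X, SUM S = y}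

/-- `(X', X'')` is a weighted `(t, Δ)`-halver of `X`: a partition of `X` into two disjoint
parts such that for every `S ⊆ X` with `SUM S ≤ t` there is `Shat ⊆ X` with
`SUM Shat = SUM S` and `SUM (Shat ∩ X'), SUM (Shat ∩ X'') ≤ (SUM Shat)/2 + Δ`. -/
def IsWeightedHalver (X X' X'' : Finset ℕ) (t Δ : ℝ) : Prop :=
  X' ∪ X'' = X ∧ Disjoint X' X'' ∧
  ∀ S ⊆ X, (SUM S : ℝ) ≤ t →
    ∃ Shat ⊆ X, SUM Shat = SUM S ∧
      ((SUM (Shat ∩ X') : ℝ) ≤ (SUM Shat : ℝ) / 2 + Δ) ∧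
      ((SUM (Shat ∩ X'') : ℝ) ≤ (SUM Shat : ℝ) / 2 + Δ)

theorem stmt_13 (X X' X'' : Finset ℕ) (hpos : ∀ x ∈ X, 0 < x) (t : ℕ) (Δ : ℝ)
    (hΔ : 0 ≤ Δ) (hhal : IsWeightedHalver X X' X'' (t : ℝ) Δ) :
    SUMS X ∩ Set.Iic t ⊆
      {y ∈ SUMS X' | (y : ℝ) ≤ (t : ℝ) / 2 + Δ} + {y ∈ SUMS X'' | (y : ℝ) ≤ (t : ℝ) / 2 + Δ} ∧
    {y ∈ SUMS X' | (y : ℝ) ≤ (t : ℝ) / 2 + Δ} + {y ∈ SUMS X'' | (y : ℝ) ≤ (t : ℝ) / 2 + Δ} ⊆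
      SUMS X := by

  obtain ⟨hunion, hdisj, hhal⟩ := hhal
  constructor
  · rintro y ⟨⟨S, hS, hSum⟩, hyt⟩
    have hyt' : (SUM S : ℝ) ≤ (t : ℝ) := by
      rw [hSum]; exact_mod_cast hyt
    obtain ⟨Shat, hShat, hSeq, h1, h2⟩ := hhal S hS hyt'
    have hsplit : Shat ∩ X' ∪ Shat ∩ X'' = Shat := by
      rw [← Finset.inter_union_distrib_left, hunion]
      exact Finset.inter_eq_left.mpr hShat
    have hdisj' : Disjoint (Shat ∩ X') (Shat ∩ X'') :=
      hdisj.mono Finset.inter_subset_right Finset.inter_subset_right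
    have hsum : SUM (Shat ∩ X') + SUM (Shat ∩ X'') = SUM Shat := by
      have h := Finset.sum_union (f := id) hdisj'
      rw [hsplit] at h; exact h.symm
    have hle : (SUM Shat : ℝ) ≤ (t : ℝ) := by rw [hSeq]; exact hyt'
    have ha : SUM (Shat ∩ X') ∈ {y | y ∈ SUMS X' ∧ (y : ℝ) ≤ (t : ℝ) / 2 + Δ} :=
      ⟨⟨Shat ∩ X', Finset.inter_subset_right, rfl⟩, by linarith⟩
    have hb : SUM (Shat ∩ X'') ∈ {y | y ∈ SUMS X'' ∧ (y : ℝ) ≤ (t : ℝ) / 2 + Δ} :=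
      ⟨⟨Shat ∩ X'', Finset.inter_subset_right, rfl⟩, by linarith⟩
    have := Set.add_mem_add ha hb
    rwa [show SUM (Shat ∩ X') + SUM (Shat ∩ X'') = y by rw [hsum, hSeq, hSum]] at this
  · rintro y hy
    rw [Set.mem_add] at hy
    obtain ⟨a, ⟨⟨S1, hS1, ha⟩, -⟩, b, ⟨⟨S2, hS2, hb⟩, -⟩, hab⟩ := hy
    have hd : Disjoint S1 S2 := hdisj.mono hS1 hS2
    refine ⟨S1 ∪ S2, ?_, ?_⟩
    · rw [← hunion]; exact Finset.union_subset_union hS1 hS2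
    · show (S1 ∪ S2).sum id = y
      rw [Finset.sum_union hd, ← hab, ← ha, ← hb]; rfl
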